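/- Let (B, L, θ) be a Boolean dynamical system. The following are equivalent: (1) either B = {∅}, or B ∖ {∅} is the only maximal tail of (B, L, θ) and B ∖ {∅} is not a cyclic maximal tail; (2) (B, L, θ) is minimal and satisfies Condition (L); (3) (B, L, θ) is minimal and satisfies Condition (K). -/

import Mathlib

namespace BoolDyn

variable {X L : Type*}

section Defs

variable [GeneralizedBooleanAlgebra X]

/-- A map `X → X` is an action on the generalized Boolean algebra `X` if it preserves
`⊥`, `⊔`, `⊓` and `\`. -/
def IsBoolAction (f : X → X) : Prop :=
  f ⊥ = ⊥ ∧ (∀ a b : X, f (a ⊔ b) = f a ⊔ f b) ∧ (∀ a b : X, f (a ⊓ b) = f a ⊓ f b) ∧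
    ∀ a b : X, f (a \ b) = f a \ f b

/-- `θ_β := θ_{β_n} ∘ ⋯ ∘ θ_{β_1}` for a word `β = β_1 ⋯ β_n ∈ L^*`, with `θ_∅ = id`. -/
def thetaWord (θ : L → X → X) (β : List L) (a : X) : X :=
  β.foldl (fun x α => θ α x) a

/-- `Δ_a := {α ∈ L : θ_α(a) ≠ ∅}`. -/
def Delta (θ : L → X → X) (a : X) : Set L := {α : L | θ α a ≠ ⊥}

/-- `a` is regular if `0 < |Δ_b| < ∞` for every nonempty `b ⊆ a`. -/
def IsRegularElem (θ : L → X → X) (a : X) : Prop :=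
  ∀ b : X, b ≤ a → b ≠ ⊥ → (Delta θ b).Finite ∧ (Delta θ b).Nonempty

/-- `B_reg`, the set of regular elements. -/
def regSet (θ : L → X → X) : Set X := {a : X | IsRegularElem θ a}

/-- An ideal of a generalized Boolean algebra: a nonempty subset closed under `⊔` and
downward closed under `≤`. -/
structure IsIdeal (I : Set X) : Prop where
  nonempty : I.Nonempty
  sup_mem : ∀ ⦃a b : X⦄, a ∈ I → b ∈ I → a ⊔ b ∈ I
  lower : ∀ ⦃a b : X⦄, a ∈ I → b ≤ a → b ∈ I

/-- A hereditary subset: closed under all the actions. -/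
def Hereditary (θ : L → X → X) (H : Set X) : Prop := ∀ a ∈ H, ∀ α : L, θ α a ∈ H

/-- Saturated: `a ∈ H` whenever `a` is regular and `θ_α(a) ∈ H` for every `α ∈ Δ_a`. -/
def Saturated (θ : L → X → X) (H : Set X) : Prop :=
  ∀ a : X, IsRegularElem θ a → (∀ α ∈ Delta θ a, θ α a ∈ H) → a ∈ H

/-- `J`-saturated: `a ∈ H` whenever `a ∈ J` and `θ_α(a) ∈ H` for every `α ∈ Δ_a`. -/
def JSaturated (θ : L → X → X) (J H : Set X) : Prop :=
  ∀ a ∈ J, (∀ α ∈ Delta θ a, θ α a ∈ H) → a ∈ H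

/-- A cycle: `β` nonempty, `a ≠ ∅`, and `θ_β(b) = b` for every `b ⊆ a`. -/
def IsCycle (θ : L → X → X) (β : List L) (a : X) : Prop :=
  β ≠ [] ∧ a ≠ ⊥ ∧ ∀ b : X, b ≤ a → thetaWord θ β b = b

/-- `(β, a)` has no exits: for every `t ∈ {1,…,n}` and every nonempty `b ⊆ θ_{β_{1,t}}(a)`,
`b` is regular and `Δ_b = {β_{t+1}}` (with `β_{n+1} := β_1`). -/
def NoExits (θ : L → X → X) (β : List L) (a : X) : Prop :=
  ∀ t : ℕ, 1 ≤ t → t ≤ β.length →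
    ∀ b : X, b ≤ thetaWord θ (β.take t) a → b ≠ ⊥ →
      IsRegularElem θ b ∧ Delta θ b = {α : L | β[t % β.length]? = some α}

/-- Condition (L): there is no cycle with no exits. -/
def CondL (θ : L → X → X) : Prop :=
  ¬ ∃ (β : List L) (a : X), IsCycle θ β a ∧ NoExits θ β a

/-- A filter of a generalized Boolean algebra. -/
structure IsBoolFilter (F : Set X) : Prop where
  nonempty : F.Nonempty
  bot_not_mem : ⊥ ∉ F
  inf_mem : ∀ ⦃a b : X⦄, a ∈ F → b ∈ F → a ⊓ b ∈ F
  upper : ∀ ⦃a b : X⦄, a ∈ F → a ≤ b → b ∈ F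

/-- An ultrafilter: a maximal filter. -/
def IsUltra (F : Set X) : Prop :=
  IsBoolFilter F ∧ ∀ G : Set X, IsBoolFilter G → F ⊆ G → G = F

/-- A filter of the ideal `I`, viewed as a generalized Boolean algebra in its own right. -/
structure IsFilterOn (I F : Set X) : Prop where
  subset : F ⊆ I
  nonempty : F.Nonempty
  bot_not_mem : ⊥ ∉ F
  inf_mem : ∀ ⦃a b : X⦄, a ∈ F → b ∈ F → a ⊓ b ∈ F
  upper : ∀ a b : X, a ∈ F → b ∈ I → a ≤ b → b ∈ F

/-- An ultrafilter of the ideal `I`: a maximal filter of `I`. -/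
def IsUltraOn (I F : Set X) : Prop :=
  IsFilterOn I F ∧ ∀ G : Set X, IsFilterOn I G → F ⊆ G → G = F

/-- `R_α := {a ∈ B : a ≤ θ_α(c) for some c ∈ B}`. -/
def Rset (θ : L → X → X) (α : L) : Set X := {a : X | ∃ c : X, a ≤ θ α c}

/-- `β^k`, the `k`-fold concatenation of the word `β`. -/
def wordPow (β : List L) : ℕ → List L
  | 0 => []
  | k + 1 => β ++ wordPow β k

/-- An ultrafilter cycle. -/
def UltrafilterCycle (θ : L → X → X) (β : List L) (η : Set X) : Prop :=
  β ≠ [] ∧ IsUltra η ∧ ∀ a ∈ η, thetaWord θ β a ∈ η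

/-- A maximal tail. -/
structure MaximalTail (θ : L → X → X) (T : Set X) : Prop where
  nonempty : T.Nonempty
  not_bot_mem : ⊥ ∉ T
  t2 : ∀ (a : X) (α : L), θ α a ∈ T → a ∈ T
  t3 : ∀ a b : X, a ⊔ b ∈ T → a ∈ T ∨ b ∈ T
  t4 : ∀ a b : X, a ∈ T → a ≤ b → b ∈ T
  t5 : ∀ a : X, a ∈ T → IsRegularElem θ a → ∃ α : L, θ α a ∈ T
  t6 : ∀ a b : X, a ∈ T → b ∈ T →
    ∃ β γ : List L, thetaWord θ β a ⊓ thetaWord θ γ b ∈ T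

/-- A cyclic (maximal) tail. -/
def CyclicTail (θ : L → X → X) (T : Set X) : Prop :=
  ∃ (β : List L) (η : Set X), UltrafilterCycle θ β η ∧
    T = {b : X | ∃ γ : List L, thetaWord θ γ b ∈ η} ∧
    ∃ A ∈ η, ∀ γ : List L, γ ≠ [] → ∀ b : X, b ≤ A → thetaWord θ γ b ∈ η →
      b ∈ η ∧ ∃ k : ℕ, 0 < k ∧ γ = wordPow β k

/-- Condition (K). -/
def CondK (θ : L → X → X) : Prop :=
  ¬ ∃ (β : List L) (η : Set X) (A : X), UltrafilterCycle θ β η ∧ A ∈ η ∧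
    ∀ γ : List L, γ ≠ [] → ∀ b : X, b ≤ A → thetaWord θ γ b ∈ η →
      b ∈ η ∧ ∃ k : ℕ, 0 < k ∧ γ = wordPow β k

/-- `H(A) = {b : b ≤ ⋃_{β ∈ F} θ_β(A) for some finite F ⊆ L^*}`. -/
def HA (θ : L → X → X) (A : X) : Set X :=
  {b : X | ∃ F : Finset (List L), b ≤ F.sup fun β => thetaWord θ β A}

/-- `I₁ ⊕ I₂`, the smallest ideal containing the ideals `I₁` and `I₂`. -/
def oplus (I₁ I₂ : Set X) : Set X := {c : X | ∃ a ∈ I₁, ∃ b ∈ I₂, c = a ⊔ b}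

/-- `S(H(A))`. -/
def SHA (θ : L → X → X) (A : X) : Set X :=
  {b : X | ∃ n : ℕ, (∀ β : List L, β.length = n → thetaWord θ β b ∈ HA θ A) ∧
    ∀ γ : List L, γ.length < n → thetaWord θ γ b ∈ oplus (HA θ A) (regSet θ)}

/-- Minimality: `{∅}` and `B` are the only saturated hereditary ideals. -/
def Minimal (θ : L → X → X) : Prop :=
  ∀ H : Set X, IsIdeal H → Hereditary θ H → Saturated θ H → H = {⊥} ∨ H = Set.univ

end Defs

end BoolDyn

open BoolDyn

/-!
The complement of a maximal tail is a saturated hereditary ideal, so under minimality every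
maximal tail is `B ∖ {∅}`; and `B ∖ {∅}` is a maximal tail because, again by minimality, the
forward orbits of any two nonzero elements meet. Conversely, a proper saturated hereditary ideal
`H` is avoided by a maximal tail: saturation and regularity push a prime filter disjoint from `H`
forward along some letter to another such prime filter, and the elements that eventually land
in the resulting chain of filters form the tail.

A cycle `(β, a)` without exits violates (K): take the least period `p` of `β` on some nonzero
`x ≤ a`, shrink `x` to a nonzero `b` disjoint from its images under the proper prefixes of
`β_{1,p}` (along the cycle, `θ_u` is inverted by `θ_v` whenever `u ++ v = β`), and any
ultrafilter containing `b` gives a witness. Conversely, under minimality every nonzero element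
eventually enters the ultrafilter `η` of a witness `(β, η, A)` of the failure of (K); this forces
`A` to be an atom fixed by `θ_β` whose forward orbit has no exits.
-/

namespace BoolDyn

variable {X L : Type*} {θ : L → X → X}

theorem thetaWord_nil (a : X) : thetaWord θ [] a = a := rfl

theorem thetaWord_cons (α : L) (γ : List L) (a : X) :
    thetaWord θ (α :: γ) a = thetaWord θ γ (θ α a) := rfl

theorem thetaWord_append (u v : List L) (a : X) :
    thetaWord θ (u ++ v) a = thetaWord θ v (thetaWord θ u a) :=
  List.foldl_append

theorem Hereditary.thetaWord_mem {H : Set X} (hH : Hereditary θ H) {a : X} (ha : a ∈ H)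
    (γ : List L) : thetaWord θ γ a ∈ H := by
  induction γ generalizing a with
  | nil => exact ha
  | cons α γ ih => exact ih (hH a ha α)

def tailOf (θ : L → X → X) (Fs : ℕ → Set X) : Set X :=
  {x | ∃ k γ, thetaWord θ γ x ∈ Fs k}

theorem exists_thetaWord_mem_of_le {Fs : ℕ → Set X}
    (hstep : ∀ k, ∃ w, ∀ c ∈ Fs k, thetaWord θ w c ∈ Fs (k + 1))
    {k m : ℕ} (hkm : k ≤ m) {c : X} (hc : c ∈ Fs k) : ∃ w, thetaWord θ w c ∈ Fs m := by
  induction m, hkm using Nat.le_induction with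
  | base => exact ⟨[], hc⟩
  | succ m _ ih =>
    obtain ⟨w, hw⟩ := ih
    obtain ⟨w', hw'⟩ := hstep m
    exact ⟨w ++ w', by rw [thetaWord_append]; exact hw' _ hw⟩

theorem getElem?_mod_of_getElem?_wordPow {M : Type*} {β : List M} {k j : ℕ} {α : M}
    (h : (wordPow β k)[j]? = some α) : β[j % β.length]? = some α := by
  induction k generalizing j with
  | zero => simp [wordPow] at h
  | succ k ih =>
    change (β ++ wordPow β k)[j]? = some α at h
    rcases lt_or_ge j β.length with hj | hj
    · rwa [List.getElem?_append_left hj, ← Nat.mod_eq_of_lt hj] at h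
    · rw [List.getElem?_append_right hj] at h
      rw [Nat.mod_eq_sub_mod hj]
      exact ih h

variable [GeneralizedBooleanAlgebra X]

namespace IsBoolAction

variable {f g : X → X}

theorem map_bot (hf : IsBoolAction f) : f ⊥ = ⊥ := hf.1

theorem map_sup (hf : IsBoolAction f) (a b : X) : f (a ⊔ b) = f a ⊔ f b := hf.2.1 a b

theorem map_inf (hf : IsBoolAction f) (a b : X) : f (a ⊓ b) = f a ⊓ f b := hf.2.2.1 a b

theorem map_sdiff (hf : IsBoolAction f) (a b : X) : f (a \ b) = f a \ f b := hf.2.2.2 a b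

theorem monotone (hf : IsBoolAction f) : Monotone f := fun a b h => by
  rw [← sup_eq_right.2 h, hf.map_sup]
  exact le_sup_left

theorem ne_bot_of_map_ne_bot (hf : IsBoolAction f) {a : X} (h : f a ≠ ⊥) : a ≠ ⊥ := by
  rintro rfl
  exact h hf.map_bot

protected theorem id : IsBoolAction (id : X → X) :=
  ⟨rfl, fun _ _ => rfl, fun _ _ => rfl, fun _ _ => rfl⟩

theorem comp (hg : IsBoolAction g) (hf : IsBoolAction f) : IsBoolAction (g ∘ f) :=
  ⟨by simp [hf.map_bot, hg.map_bot], fun a b => by simp [hf.map_sup, hg.map_sup],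
    fun a b => by simp [hf.map_inf, hg.map_inf], fun a b => by simp [hf.map_sdiff, hg.map_sdiff]⟩

theorem injOn (hf : IsBoolAction f) {c : X} (hc : ∀ z ≤ c, z ≠ ⊥ → f z ≠ ⊥) :
    Set.InjOn f (Set.Iic c) := by
  have key : ∀ ⦃x y : X⦄, x ≤ c → f x = f y → x ≤ y := fun x y hx hxy => by
    by_contra h
    exact hc (x \ y) (sdiff_le.trans hx) (fun h' => h (sdiff_eq_bot_iff.1 h'))
      (by rw [hf.map_sdiff, hxy, sdiff_self])
  exact fun x hx y hy hxy => le_antisymm (key hx hxy) (key hy hxy.symm)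

end IsBoolAction

theorem isBoolAction_thetaWord (hθ : ∀ α, IsBoolAction (θ α)) (γ : List L) :
    IsBoolAction (thetaWord θ γ) := by
  induction γ with
  | nil => exact IsBoolAction.id
  | cons α γ ih => exact ih.comp (hθ α)

theorem UltrafilterCycle.thetaWord_wordPow_mem {β : List L} {η : Set X}
    (h : UltrafilterCycle θ β η) {a : X} (ha : a ∈ η) (k : ℕ) :
    thetaWord θ (wordPow β k) a ∈ η := by
  induction k generalizing a with
  | zero => exact ha
  | succ k ih => exact thetaWord_append β (wordPow β k) a ▸ ih (h.2.2 a ha)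

theorem IsCycle.thetaWord_thetaWord_of_append_eq {β : List L} {a : X} (hC : IsCycle θ β a)
    {u v : List L} (huv : u ++ v = β) {y : X} (hy : y ≤ a) :
    thetaWord θ v (thetaWord θ u y) = y := by
  rw [← thetaWord_append, huv]
  exact hC.2.2 y hy

section Filters

theorem IsIdeal.bot_mem {H : Set X} (hH : IsIdeal H) : ⊥ ∈ H :=
  let ⟨_, hx⟩ := hH.nonempty
  hH.lower hx bot_le

theorem isIdeal_Iic (x : X) : IsIdeal (Set.Iic x) :=
  ⟨⟨x, le_rfl⟩, fun _ _ => sup_le, fun _ _ ha hb => hb.trans ha⟩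

structure IsPrimeFilter (F : Set X) : Prop extends IsBoolFilter F where
  prime : ∀ ⦃a b : X⦄, a ⊔ b ∈ F → a ∈ F ∨ b ∈ F

/-- The prime ideal theorem for distributive lattices, transported to the set-based notions. -/
theorem exists_isPrimeFilter_of_disjoint {G₀ H : Set X} (hG₀ : IsBoolFilter G₀)
    (hH : IsIdeal H) (hdisj : Disjoint G₀ H) :
    ∃ G, IsPrimeFilter G ∧ G₀ ⊆ G ∧ Disjoint G H := by
  have hI : Order.IsIdeal H :=
    ⟨fun _ _ hba ha => hH.lower ha hba, hH.nonempty,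
      fun a ha b hb => ⟨a ⊔ b, hH.sup_mem ha hb, le_sup_left, le_sup_right⟩⟩
  have hF : Order.IsPFilter G₀ :=
    .of_def hG₀.nonempty
      (fun a ha b hb => ⟨a ⊓ b, hG₀.inf_mem ha hb, inf_le_left, inf_le_right⟩)
      (fun hab ha => hG₀.upper ha hab)
  obtain ⟨J, hJ, hHJ, hG₀J⟩ :=
    DistribLattice.prime_ideal_of_disjoint_filter_ideal (F := hF.toPFilter) (I := hI.toIdeal) hdisj
  have hHJ : H ⊆ J := hHJ
  have hG₀J : G₀ ⊆ (J : Set X)ᶜ := hG₀J.subset_compl_right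
  refine ⟨(J : Set X)ᶜ, ⟨⟨hG₀.nonempty.mono hG₀J, fun h => h (hHJ hH.bot_mem), ?_, ?_⟩, ?_⟩,
    hG₀J, Set.disjoint_compl_left_iff_subset.2 hHJ⟩
  · exact fun a b ha hb hab => (hJ.mem_or_mem hab).elim ha hb
  · exact fun a b ha hab hb => ha (J.lower hab hb)
  · intro a b hab
    by_contra! h
    exact hab (J.sup_mem (not_not.1 h.1) (not_not.1 h.2))

theorem IsPrimeFilter.isUltra {F : Set X} (hF : IsPrimeFilter F) : IsUltra F := by
  refine ⟨hF.toIsBoolFilter, fun G hG hFG => (Set.Subset.antisymm ?_ hFG)⟩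
  intro x hx
  obtain ⟨c, hc⟩ := hF.nonempty
  rcases hF.prime ((sup_inf_sdiff c x).symm ▸ hc) with h | h
  · exact hF.upper h inf_le_right
  · exact absurd (by simpa using hG.inf_mem (hFG h) hx) hG.bot_not_mem

theorem IsUltra.isPrimeFilter {F : Set X} (hF : IsUltra F) : IsPrimeFilter F := by
  refine ⟨hF.1, fun a b hab => or_iff_not_imp_left.2 fun ha => ?_⟩
  have hdisj : Disjoint F (Set.Iic a) :=
    Set.disjoint_left.2 fun c hc hca => ha (hF.1.upper hc hca)
  obtain ⟨G, hG, hFG, hGa⟩ := exists_isPrimeFilter_of_disjoint hF.1 (isIdeal_Iic a) hdisj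
  rw [← hF.2 G hG.toIsBoolFilter hFG]
  exact (hG.prime (hFG hab)).resolve_left fun haG =>
    Set.disjoint_left.1 hGa haG (Set.mem_Iic.2 le_rfl)

theorem isBoolFilter_Ici {b : X} (hb : b ≠ ⊥) : IsBoolFilter (Set.Ici b) :=
  ⟨⟨b, le_rfl⟩, fun h => hb (le_bot_iff.1 h), fun _ _ => le_inf, fun _ _ h h' => h.trans h'⟩

theorem exists_isUltra_mem {b : X} (hb : b ≠ ⊥) : ∃ F, IsUltra F ∧ b ∈ F := by
  have hdisj : Disjoint (Set.Ici b) (Set.Iic ⊥) :=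
    Set.disjoint_left.2 fun _ h h' => hb (le_bot_iff.1 (h.trans h'))
  obtain ⟨F, hF, hbF, -⟩ :=
    exists_isPrimeFilter_of_disjoint (isBoolFilter_Ici hb) (isIdeal_Iic ⊥) hdisj
  exact ⟨F, hF.isUltra, hbF le_rfl⟩

theorem IsBoolFilter.exists_le_of_finite {F : Set X} (hF : IsBoolFilter F) {ι : Type*}
    {s : Set ι} (hs : s.Finite) {c : ι → X} (hc : ∀ i, c i ∈ F) {r : X} (hr : r ∈ F) :
    ∃ d ∈ F, d ≤ r ∧ ∀ i ∈ s, d ≤ c i := by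
  induction s, hs using Set.Finite.induction_on with
  | empty => exact ⟨r, hr, le_rfl, by simp⟩
  | @insert i s _ _ ih =>
    obtain ⟨d, hd, hdr, hdc⟩ := ih
    refine ⟨d ⊓ c i, hF.inf_mem hd (hc i), inf_le_left.trans hdr, ?_⟩
    rintro j (rfl | hj)
    exacts [inf_le_right, inf_le_left.trans (hdc j hj)]

end Filters

section MaximalTails

theorem MaximalTail.isIdeal_compl {T : Set X} (hT : MaximalTail θ T) : IsIdeal Tᶜ :=
  ⟨⟨⊥, hT.not_bot_mem⟩, fun a b ha hb hab => (hT.t3 a b hab).elim ha hb,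
    fun a b ha hba hb => ha (hT.t4 b a hb hba)⟩

theorem MaximalTail.hereditary_compl {T : Set X} (hT : MaximalTail θ T) : Hereditary θ Tᶜ :=
  fun a ha α haT => ha (hT.t2 a α haT)

theorem MaximalTail.saturated_compl {T : Set X} (hT : MaximalTail θ T) : Saturated θ Tᶜ := by
  intro a hreg hsub haT
  obtain ⟨α, hα⟩ := hT.t5 a haT hreg
  exact hsub α (fun h => hT.not_bot_mem (h ▸ hα)) hα

theorem Minimal.maximalTail_eq (hmin : Minimal θ) {T : Set X} (hT : MaximalTail θ T) :
    T = {a | a ≠ ⊥} := by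
  rcases hmin Tᶜ hT.isIdeal_compl hT.hereditary_compl hT.saturated_compl with h | h
  · rw [← compl_compl T, h]
    rfl
  · obtain ⟨x, hx⟩ := hT.nonempty
    exact absurd hx (h ▸ Set.mem_univ x : x ∈ Tᶜ)

theorem maximalTail_tailOf (hθ : ∀ α, IsBoolAction (θ α)) {Fs : ℕ → Set X}
    (hF : ∀ k, IsPrimeFilter (Fs k))
    (hstep : ∀ k, ∃ w, ∀ c ∈ Fs k, thetaWord θ w c ∈ Fs (k + 1))
    (hcont : ∀ k r, r ∈ Fs k → IsRegularElem θ r → ∃ α, θ α r ∈ tailOf θ Fs) :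
    MaximalTail θ (tailOf θ Fs) := by
  have hw := isBoolAction_thetaWord hθ
  refine ⟨?_, ?_, ?_, ?_, ?_, ?_, ?_⟩
  · obtain ⟨x, hx⟩ := (hF 0).nonempty
    exact ⟨x, 0, [], hx⟩
  · rintro ⟨k, γ, h⟩
    exact (hF k).bot_not_mem ((hw γ).map_bot ▸ h)
  · rintro a α ⟨k, γ, h⟩
    exact ⟨k, α :: γ, h⟩
  · rintro a b ⟨k, γ, h⟩
    rw [(hw γ).map_sup] at h
    exact ((hF k).prime h).imp (fun h => ⟨k, γ, h⟩) (fun h => ⟨k, γ, h⟩)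
  · rintro a b ⟨k, γ, h⟩ hab
    exact ⟨k, γ, (hF k).upper h ((hw γ).monotone hab)⟩
  · rintro a ⟨k, _ | ⟨α, γ⟩, h⟩ hreg
    · exact hcont k a h hreg
    · exact ⟨α, k, γ, h⟩
  · rintro a b ⟨k, γ, ha⟩ ⟨m, δ, hb⟩
    obtain ⟨w, hw⟩ := exists_thetaWord_mem_of_le hstep (le_max_left k m) ha
    obtain ⟨w', hw'⟩ := exists_thetaWord_mem_of_le hstep (le_max_right k m) hb
    refine ⟨γ ++ w, δ ++ w', max k m, [], ?_⟩
    rw [thetaWord_append, thetaWord_append]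
    exact (hF _).inf_mem hw hw'

theorem UltrafilterCycle.exists_cons_mem {β : List L} {η : Set X} (h : UltrafilterCycle θ β η)
    {x : X} {γ : List L} (hγ : thetaWord θ γ x ∈ η) : ∃ α γ', thetaWord θ (α :: γ') x ∈ η := by
  cases γ with
  | cons α γ' => exact ⟨α, γ', hγ⟩
  | nil =>
    obtain ⟨α, β', rfl⟩ := List.exists_cons_of_ne_nil h.1
    exact ⟨α, β', h.2.2 x hγ⟩

theorem UltrafilterCycle.maximalTail (hθ : ∀ α, IsBoolAction (θ α)) {β : List L} {η : Set X}
    (h : UltrafilterCycle θ β η) : MaximalTail θ {b | ∃ γ, thetaWord θ γ b ∈ η} := by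
  have heq : {b | ∃ γ, thetaWord θ γ b ∈ η} = tailOf θ (fun _ => η) := by
    ext
    simp [tailOf]
  rw [heq]
  refine maximalTail_tailOf hθ (fun _ => h.2.1.isPrimeFilter) (fun _ => ⟨β, h.2.2⟩) ?_
  intro _ r hr _
  obtain ⟨α, γ, h'⟩ := h.exists_cons_mem (γ := []) hr
  exact ⟨α, 0, γ, h'⟩

def orbitDisjoint (θ : L → X → X) (a : X) : Set X :=
  {x | ∀ β γ, thetaWord θ β a ⊓ thetaWord θ γ x = ⊥}

theorem isIdeal_orbitDisjoint (hθ : ∀ α, IsBoolAction (θ α)) (a : X) :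
    IsIdeal (orbitDisjoint θ a) := by
  have hw := isBoolAction_thetaWord hθ
  refine ⟨⟨⊥, fun β γ => by rw [(hw γ).map_bot, inf_bot_eq]⟩, ?_, ?_⟩
  · intro x y hx hy β γ
    rw [(hw γ).map_sup, inf_sup_left, hx β γ, hy β γ, sup_bot_eq]
  · intro x y hx hyx β γ
    exact le_bot_iff.1 ((inf_le_inf_left _ ((hw γ).monotone hyx)).trans (hx β γ).le)

theorem hereditary_orbitDisjoint (a : X) : Hereditary θ (orbitDisjoint θ a) :=
  fun _ hx α β γ => hx β (α :: γ)

theorem saturated_orbitDisjoint (hθ : ∀ α, IsBoolAction (θ α)) (a : X) :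
    Saturated θ (orbitDisjoint θ a) := by
  intro x hreg hsub β γ
  cases γ with
  | cons α γ =>
    by_cases hα : θ α x = ⊥
    · rw [thetaWord_cons, hα, (isBoolAction_thetaWord hθ γ).map_bot, inf_bot_eq]
    · exact hsub α hα β γ
  | nil =>
    by_contra hz
    obtain ⟨α, hα⟩ := (hreg _ inf_le_right hz).2
    have hαx : α ∈ Delta θ x := fun h => hα (le_bot_iff.1 (h ▸ (hθ α).monotone inf_le_right))
    have h := hsub α hαx (β ++ [α]) []
    rw [thetaWord_append] at h
    exact hα ((hθ α).map_inf _ _ ▸ h)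

theorem Minimal.maximalTail_ne_bot (hθ : ∀ α, IsBoolAction (θ α)) (hmin : Minimal θ) {e : X}
    (he : e ≠ ⊥) : MaximalTail θ {a | a ≠ ⊥} := by
  refine ⟨⟨e, he⟩, fun h => h rfl, fun a α ha h => ha (h ▸ (hθ α).map_bot), ?_, ?_,
    fun a ha hreg => (hreg a le_rfl ha).2, ?_⟩
  · exact fun a b hab => not_and_or.1 fun h => hab (by rw [h.1, h.2, sup_bot_eq])
  · exact fun a b ha hab hb => ha (le_bot_iff.1 (hb ▸ hab))
  · intro a b ha hb
    rcases hmin _ (isIdeal_orbitDisjoint hθ a) (hereditary_orbitDisjoint a)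
      (saturated_orbitDisjoint hθ a) with h | h
    · have hb' : b ∉ orbitDisjoint θ a := fun h' => hb (by rw [h] at h'; exact h')
      simpa [orbitDisjoint] using hb'
    · have ha' : a ∈ orbitDisjoint θ a := h ▸ Set.mem_univ a
      exact absurd (by simpa [thetaWord_nil] using ha' [] []) ha

end MaximalTails

section TailAvoidingIdeal

variable {H : Set X}

/-- If some `α` were sent into `H` by an element `c α` of `F`, then an element of `F` below `r`
and below the finitely many `c α`, `α ∈ Δ_r`, would lie in `H` by saturation. -/
theorem exists_forall_notMem_of_saturated (hθ : ∀ α, IsBoolAction (θ α)) (hH : IsIdeal H)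
    (hsat : Saturated θ H) {F : Set X} (hF : IsBoolFilter F) (hFH : Disjoint F H) {r : X}
    (hr : r ∈ F) (hreg : IsRegularElem θ r) : ∃ α, ∀ c ∈ F, θ α c ∉ H := by
  by_contra! h
  choose c hcF hcH using h
  have hr0 : r ≠ ⊥ := fun h => hF.bot_not_mem (h ▸ hr)
  obtain ⟨d, hdF, hdr, hdc⟩ := hF.exists_le_of_finite (hreg r le_rfl hr0).1 hcF hr
  refine Set.disjoint_left.1 hFH hdF (hsat d (fun b hb => hreg b (hb.trans hdr)) fun α hα => ?_)
  have hαr : α ∈ Delta θ r := fun h => hα (le_bot_iff.1 (h ▸ (hθ α).monotone hdr))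
  exact hH.lower (hcH α) ((hθ α).monotone (hdc α hαr))

theorem exists_isPrimeFilter_image (hθ : ∀ α, IsBoolAction (θ α)) (hH : IsIdeal H)
    (hsat : Saturated θ H) {F : Set X} (hF : IsBoolFilter F) (hFH : Disjoint F H) {r : X}
    (hr : r ∈ F) (hreg : IsRegularElem θ r) :
    ∃ G, (IsPrimeFilter G ∧ Disjoint G H) ∧ ∃ α, ∀ c ∈ F, θ α c ∈ G := by
  obtain ⟨α, hα⟩ := exists_forall_notMem_of_saturated hθ hH hsat hF hFH hr hreg
  set G₀ : Set X := {x | ∃ c ∈ F, θ α c ≤ x}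
  have hG₀H : Disjoint G₀ H := by
    refine Set.disjoint_left.2 ?_
    rintro x ⟨c, hc, hcx⟩ hx
    exact hα c hc (hH.lower hx hcx)
  have hG₀ : IsBoolFilter G₀ := by
    obtain ⟨c, hc⟩ := hF.nonempty
    refine ⟨⟨θ α c, c, hc, le_rfl⟩, fun h => Set.disjoint_left.1 hG₀H h hH.bot_mem, ?_, ?_⟩
    · rintro x y ⟨c, hc, hcx⟩ ⟨d, hd, hdy⟩
      exact ⟨c ⊓ d, hF.inf_mem hc hd, (hθ α).map_inf c d ▸ inf_le_inf hcx hdy⟩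
    · rintro x y ⟨c, hc, hcx⟩ hxy
      exact ⟨c, hc, hcx.trans hxy⟩
  obtain ⟨G, hG, hG₀G, hGH⟩ := exists_isPrimeFilter_of_disjoint hG₀ hH hG₀H
  exact ⟨G, ⟨hG, hGH⟩, α, fun c hc => hG₀G ⟨c, hc, le_rfl⟩⟩

open Classical in
noncomputable def nextFilter (θ : L → X → X) (H F : Set X) : Set X :=
  if h : ∃ G, (IsPrimeFilter G ∧ Disjoint G H) ∧ ∃ α, ∀ c ∈ F, θ α c ∈ G then h.choose else F

theorem nextFilter_spec {F : Set X} (hF : IsPrimeFilter F ∧ Disjoint F H) :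
    (IsPrimeFilter (nextFilter θ H F) ∧ Disjoint (nextFilter θ H F) H) ∧
      ∃ w, ∀ c ∈ F, thetaWord θ w c ∈ nextFilter θ H F := by
  unfold nextFilter
  split_ifs with h
  · obtain ⟨hG, α, hα⟩ := h.choose_spec
    exact ⟨hG, [α], hα⟩
  · exact ⟨hF, [], fun c hc => hc⟩

theorem exists_mem_nextFilter {F : Set X}
    (h : ∃ G, (IsPrimeFilter G ∧ Disjoint G H) ∧ ∃ α, ∀ c ∈ F, θ α c ∈ G) :
    ∃ α, ∀ c ∈ F, θ α c ∈ nextFilter θ H F := by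
  rw [nextFilter, dif_pos h]
  exact h.choose_spec.2

theorem exists_maximalTail_disjoint (hθ : ∀ α, IsBoolAction (θ α)) (hH : IsIdeal H)
    (hher : Hereditary θ H) (hsat : Saturated θ H) {a : X} (ha : a ∉ H) :
    ∃ T, MaximalTail θ T ∧ a ∈ T ∧ Disjoint T H := by
  have ha0 : a ≠ ⊥ := fun h => ha (h ▸ hH.bot_mem)
  obtain ⟨F₀, hF₀, haF₀, hF₀H⟩ := exists_isPrimeFilter_of_disjoint (isBoolFilter_Ici ha0) hH
    (Set.disjoint_left.2 fun x hx hxH => ha (hH.lower hxH hx))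
  let Fs : ℕ → Set X := fun k => (nextFilter θ H)^[k] F₀
  have hFs : ∀ k, Fs (k + 1) = nextFilter θ H (Fs k) :=
    fun k => Function.iterate_succ_apply' _ _ _
  have hgood : ∀ k, IsPrimeFilter (Fs k) ∧ Disjoint (Fs k) H := by
    intro k
    induction k with
    | zero => exact ⟨hF₀, hF₀H⟩
    | succ k ih => exact hFs k ▸ (nextFilter_spec ih).1
  refine ⟨tailOf θ Fs, maximalTail_tailOf hθ (fun k => (hgood k).1)
    (fun k => hFs k ▸ (nextFilter_spec (hgood k)).2) ?_, ⟨0, [], haF₀ le_rfl⟩, ?_⟩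
  · intro k r hr hreg
    obtain ⟨α, hα⟩ := exists_mem_nextFilter
      (exists_isPrimeFilter_image hθ hH hsat (hgood k).1.toIsBoolFilter (hgood k).2 hr hreg)
    exact ⟨α, k + 1, [], hFs k ▸ hα r hr⟩
  · exact Set.disjoint_left.2 fun x ⟨k, γ, hx⟩ hxH =>
      Set.disjoint_left.1 (hgood k).2 hx (hher.thetaWord_mem hxH γ)

theorem minimal_of_forall_maximalTail_eq (hθ : ∀ α, IsBoolAction (θ α))
    (huniq : ∀ T, MaximalTail θ T → T = {a | a ≠ ⊥}) : Minimal θ := by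
  intro H hH hher hsat
  refine or_iff_not_imp_right.2 fun hne => Set.eq_singleton_iff_unique_mem.2 ⟨hH.bot_mem, ?_⟩
  obtain ⟨a, ha⟩ := (Set.ne_univ_iff_exists_notMem H).1 hne
  obtain ⟨T, hT, -, hTH⟩ := exists_maximalTail_disjoint hθ hH hher hsat ha
  intro x hx
  by_contra hx0
  exact Set.disjoint_left.1 hTH ((huniq T hT).symm ▸ hx0 : x ∈ T) hx

end TailAvoidingIdeal

/-- The condition on `A ∈ η` in `CyclicTail` and `CondK`. -/
def ReturnsOnlyByPowers (θ : L → X → X) (β : List L) (η : Set X) (A : X) : Prop :=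
  ∀ γ : List L, γ ≠ [] → ∀ b : X, b ≤ A → thetaWord θ γ b ∈ η →
    b ∈ η ∧ ∃ k : ℕ, 0 < k ∧ γ = wordPow β k

namespace ReturnsOnlyByPowers

variable {β : List L} {η : Set X} {A : X} (hP : ReturnsOnlyByPowers θ β η A)
include hP

/-- Reading off the letter at position `t` of `β.take t ++ α :: γ = β ^ k`. -/
theorem getElem?_eq_some (hθ : ∀ α, IsBoolAction (θ α)) (hUC : UltrafilterCycle θ β η)
    {t : ℕ} (ht : t ≤ β.length) {z : X} (hz : z ≤ thetaWord θ (β.take t) A) {α : L}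
    {γ : List L} (h : thetaWord θ (α :: γ) z ∈ η) : β[t % β.length]? = some α := by
  have hmem : thetaWord θ (β.take t ++ α :: γ) A ∈ η := by
    rw [thetaWord_append]
    exact hUC.2.1.1.upper h ((isBoolAction_thetaWord hθ _).monotone hz)
  obtain ⟨-, k, -, heq⟩ := hP _ (by simp) A le_rfl hmem
  apply getElem?_mod_of_getElem?_wordPow (k := k)
  rw [← heq, List.getElem?_append_right (by simp), List.length_take_of_le ht]
  simp

section Cofinal

variable (hcof : ∀ x : X, x ≠ ⊥ → ∃ γ, thetaWord θ γ x ∈ η)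
include hcof

theorem mem_of_le {y : X} (hyA : y ≤ A) (hy : y ≠ ⊥) : y ∈ η := by
  obtain ⟨_ | ⟨α, γ⟩, hγ⟩ := hcof y hy
  · exact hγ
  · exact (hP _ (List.cons_ne_nil α γ) y hyA hγ).1

theorem le_of_mem (hη : IsBoolFilter η) {x : X} (hx : x ∈ η) : A ≤ x := by
  by_contra h
  have hAx := hP.mem_of_le hcof sdiff_le fun h' => h (sdiff_eq_bot_iff.1 h')
  exact hη.bot_not_mem (by simpa using hη.inf_mem hAx hx)

variable (hθ : ∀ α, IsBoolAction (θ α)) (hUC : UltrafilterCycle θ β η)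
include hθ hUC

theorem noExits : NoExits θ β A := by
  intro t _ ht z hz hz0
  have hn : 0 < β.length := List.length_pos_iff.2 hUC.1
  have key : ∀ z' ≤ thetaWord θ (β.take t) A, z' ≠ ⊥ →
      Delta θ z' = {α | β[t % β.length]? = some α} := by
    intro z' hz' hz'0
    obtain ⟨γ₀, h₀⟩ := hcof z' hz'0
    obtain ⟨α₀, γ₀, h₀⟩ := hUC.exists_cons_mem h₀
    ext α
    refine ⟨fun hα => ?_, fun hα => ?_⟩
    · obtain ⟨γ, hγ⟩ := hcof _ hα
      exact hP.getElem?_eq_some hθ hUC ht hz' hγ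
    · obtain rfl : α = α₀ :=
        Option.some_injective _ (hα.symm.trans (hP.getElem?_eq_some hθ hUC ht hz' h₀))
      exact (isBoolAction_thetaWord hθ γ₀).ne_bot_of_map_ne_bot
        fun h => hUC.2.1.1.bot_not_mem (h ▸ h₀)
  refine ⟨fun b hb hb0 => ?_, key z hz hz0⟩
  rw [key b (hb.trans hz) hb0]
  exact ⟨Set.Subsingleton.finite fun _ h _ h' => Option.some_injective _ (h.symm.trans h'),
    _, List.getElem?_eq_getElem (Nat.mod_lt t hn)⟩

variable (hA : A ∈ η)
include hA

theorem thetaWord_self : thetaWord θ β A = A := by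
  have hη := hUC.2.1.1
  have hw := isBoolAction_thetaWord hθ
  refine le_antisymm ?_ (hP.le_of_mem hcof hη (hUC.2.2 A hA))
  by_contra h
  obtain ⟨γ, hγ⟩ := hcof _ fun h' => h (sdiff_eq_bot_iff.1 h')
  have hβγ : thetaWord θ (β ++ γ) A ∈ η := by
    rw [thetaWord_append]
    exact hη.upper hγ ((hw γ).monotone sdiff_le)
  obtain ⟨-, _ | j, hk, heq⟩ := hP _ (by simp [hUC.1]) A le_rfl hβγ
  · exact absurd hk (lt_irrefl 0)
  obtain rfl : γ = wordPow β j := List.append_cancel_left heq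
  have hbot := hη.inf_mem (hUC.thetaWord_wordPow_mem hA j) hγ
  rw [← (hw _).map_inf, inf_sdiff_self_right, (hw _).map_bot] at hbot
  exact hη.bot_not_mem hbot

theorem isCycle : IsCycle θ β A := by
  refine ⟨hUC.1, fun h => hUC.2.1.1.bot_not_mem (h ▸ hA), fun y hy => ?_⟩
  by_cases hy0 : y = ⊥
  · rw [hy0, (isBoolAction_thetaWord hθ β).map_bot]
  · rw [le_antisymm hy (hP.le_of_mem hcof hUC.2.1.1 (hP.mem_of_le hcof hy hy0))]
    exact hP.thetaWord_self hcof hθ hUC hA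

end Cofinal

end ReturnsOnlyByPowers

theorem condK_of_condL (hθ : ∀ α, IsBoolAction (θ α)) (hmin : Minimal θ) (hL : CondL θ) :
    CondK θ := by
  rintro ⟨β, η, A, hUC, hA, hP⟩
  have hcof : ∀ x : X, x ≠ ⊥ → ∃ γ, thetaWord θ γ x ∈ η := fun x hx =>
    ((hmin.maximalTail_eq (hUC.maximalTail hθ)).symm ▸ hx : x ∈ {b | ∃ γ, thetaWord θ γ b ∈ η})
  exact hL ⟨β, A, ReturnsOnlyByPowers.isCycle hP hcof hθ hUC hA,
    ReturnsOnlyByPowers.noExits hP hcof hθ hUC⟩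

section CycleWithoutExits

variable {β : List L} {a : X} (hθ : ∀ α, IsBoolAction (θ α)) (hC : IsCycle θ β a)
  (hN : NoExits θ β a)
include hC hN

theorem NoExits.delta_eq {u : List L} {α : L} (hu : u ++ [α] <+: β) {z : X}
    (hz : z ≤ thetaWord θ u a) (hz0 : z ≠ ⊥) : Delta θ z = {α} := by
  have hlt : u.length < β.length := by simpa using hu.length_le
  have hα : β[u.length]? = some α := by
    obtain ⟨l, rfl⟩ := hu
    simp
  have hu' : u = β.take u.length := List.prefix_iff_eq_take.1 ((List.prefix_append u _).trans hu)
  -- `NoExits` speaks about the positions `1, …, n`; position `0` is read as position `n`.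
  obtain ⟨t, ht1, htn, hmod, hta⟩ : ∃ t, 1 ≤ t ∧ t ≤ β.length ∧ t % β.length = u.length ∧
      thetaWord θ (β.take t) a = thetaWord θ u a := by
    rcases Nat.eq_zero_or_pos u.length with h0 | hpos
    · refine ⟨β.length, by omega, le_rfl, by simp [h0], ?_⟩
      rw [List.take_length, hC.2.2 a le_rfl, List.length_eq_zero_iff.1 h0, thetaWord_nil]
    · exact ⟨u.length, hpos, hlt.le, Nat.mod_eq_of_lt hlt, by rw [← hu']⟩
  rw [(hN t ht1 htn z (hta ▸ hz) hz0).2, hmod, hα]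
  ext
  simp [eq_comm]

include hθ

theorem NoExits.thetaWord_ne_bot {u δ : List L} (h : u ++ δ <+: β) {z : X}
    (hz : z ≤ thetaWord θ u a) (hz0 : z ≠ ⊥) : thetaWord θ δ z ≠ ⊥ := by
  induction δ generalizing u z with
  | nil => exact hz0
  | cons α δ ih =>
    have hα : u ++ [α] <+: β :=
      (List.prefix_append (u ++ [α]) δ).trans (by simpa using h : u ++ [α] ++ δ <+: β)
    have hαz : α ∈ Delta θ z := (hN.delta_eq hC hα hz hz0).symm ▸ Set.mem_singleton α
    refine ih (u := u ++ [α]) (by simpa using h) ?_ hαz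
    rw [thetaWord_append]
    exact (hθ α).monotone hz

theorem NoExits.prefix_of_thetaWord_ne_bot {u γ : List L} (hu : u <+: β)
    (hlen : u.length + γ.length ≤ β.length) {z : X} (hz : z ≤ thetaWord θ u a)
    (h : thetaWord θ γ z ≠ ⊥) : u ++ γ <+: β := by
  induction γ generalizing u z with
  | nil => simpa using hu
  | cons α γ ih =>
    have hlt : u.length < β.length := by simp at hlen; omega
    have hnext : u ++ [β[u.length]] <+: β := by
      have := List.take_prefix (u.length + 1) β
      rwa [← List.take_concat_get' β u.length hlt, ← List.prefix_iff_eq_take.1 hu] at this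
    have hαz : α ∈ Delta θ z := (isBoolAction_thetaWord hθ γ).ne_bot_of_map_ne_bot h
    rw [hN.delta_eq hC hnext hz ((isBoolAction_thetaWord hθ _).ne_bot_of_map_ne_bot h)] at hαz
    have hu' : u ++ [α] <+: β := (Set.mem_singleton_iff.1 hαz) ▸ hnext
    simpa using ih hu' (by simp at hlen ⊢; omega)
      (by rw [thetaWord_append]; exact (hθ α).monotone hz) h

theorem NoExits.thetaWord_thetaWord_of_append_eq {u v : List L} (huv : u ++ v = β) {z : X}
    (hz : z ≤ thetaWord θ u a) : thetaWord θ u (thetaWord θ v z) = z := by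
  have hw := isBoolAction_thetaWord hθ
  have hva : thetaWord θ v z ≤ a :=
    hC.thetaWord_thetaWord_of_append_eq huv le_rfl ▸ (hw v).monotone hz
  refine (hw v).injOn (c := thetaWord θ u a)
    (fun z' hz' hz'0 => hN.thetaWord_ne_bot hθ hC (huv ▸ List.prefix_refl β) hz' hz'0)
    ((hw u).monotone hva) hz ?_
  exact hC.thetaWord_thetaWord_of_append_eq huv hva

theorem NoExits.exists_le_inf_thetaWord_eq_bot {u v : List L} (huv : u ++ v = β) {y : X}
    (hy : y ≤ a) (hne : thetaWord θ u y ≠ y) :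
    ∃ y' ≤ y, y' ≠ ⊥ ∧ y' ⊓ thetaWord θ u y' = ⊥ := by
  have hw := isBoolAction_thetaWord hθ
  by_cases h : y \ thetaWord θ u y = ⊥
  · -- `y < θ_u(y)`: pull the surplus `θ_u(y) \ y` back along `θ_v`.
    have hle : y ≤ thetaWord θ u y := sdiff_eq_bot_iff.1 h
    have hz0 : thetaWord θ u y \ y ≠ ⊥ := fun h' => hne (le_antisymm (sdiff_eq_bot_iff.1 h') hle)
    have hφ := hN.thetaWord_thetaWord_of_append_eq hθ hC huv
      (sdiff_le.trans ((hw u).monotone hy) : thetaWord θ u y \ y ≤ thetaWord θ u a)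
    have hvy : thetaWord θ v (thetaWord θ u y \ y) ≤ y := by
      rw [(hw v).map_sdiff, hC.thetaWord_thetaWord_of_append_eq huv hy]
      exact sdiff_le
    refine ⟨_, hvy, fun h' => hz0 (by rw [← hφ, h', (hw u).map_bot]), ?_⟩
    rw [hφ]
    exact le_bot_iff.1 ((inf_le_inf_right _ hvy).trans inf_sdiff_self_right.le)
  · refine ⟨y \ thetaWord θ u y, sdiff_le, h, ?_⟩
    exact le_bot_iff.1 ((inf_le_inf_left _ ((hw u).monotone sdiff_le)).trans inf_sdiff_self_left.le)

theorem NoExits.exists_forall_inf_thetaWord_take_eq_bot {p : ℕ} {x : X} (hxa : x ≤ a)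
    (hx0 : x ≠ ⊥)
    (hmin : ∀ r, 0 < r → r < p → ∀ y ≤ x, y ≠ ⊥ → ∃ y' ≤ y, thetaWord θ (β.take r) y' ≠ y') :
    ∃ b ≤ x, b ≠ ⊥ ∧ ∀ r, 0 < r → r < p → b ⊓ thetaWord θ (β.take r) b = ⊥ := by
  suffices h : ∀ m ≤ p, ∃ b ≤ x, b ≠ ⊥ ∧ ∀ r, 0 < r → r < m → b ⊓ thetaWord θ (β.take r) b = ⊥
    from h p le_rfl
  intro m hm
  induction m with
  | zero => exact ⟨x, le_rfl, hx0, fun r _ hr => absurd hr (Nat.not_lt_zero r)⟩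
  | succ m ih =>
    obtain ⟨b, hbx, hb0, hb⟩ := ih (by omega)
    rcases Nat.eq_zero_or_pos m with rfl | hm0
    · exact ⟨b, hbx, hb0, fun r h0 hr => by omega⟩
    obtain ⟨y, hyb, hy⟩ := hmin m hm0 (by omega) b hbx hb0
    obtain ⟨b', hb'y, hb'0, hb'⟩ := hN.exists_le_inf_thetaWord_eq_bot hθ hC
      (List.take_append_drop m β) (hyb.trans hbx |>.trans hxa) hy
    have hb'b : b' ≤ b := hb'y.trans hyb
    refine ⟨b', hb'b.trans hbx, hb'0, fun r h0 hr => ?_⟩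
    rcases Nat.lt_succ_iff_lt_or_eq.1 hr with hr | rfl
    · exact le_bot_iff.1 ((inf_le_inf hb'b
        ((isBoolAction_thetaWord hθ _).monotone hb'b)).trans (hb r h0 hr).le)
    · exact hb'

theorem NoExits.exists_eq_wordPow_append_take {p : ℕ} (hp0 : 0 < p) (hpn : p ≤ β.length)
    {x : X} (hxa : x ≤ a) (hfix : ∀ y ≤ x, thetaWord θ (β.take p) y = y)
    (γ : List L) {y : X} (hy : y ≤ x) (h : thetaWord θ γ y ≠ ⊥) :
    ∃ k r, r < p ∧ γ = wordPow (β.take p) k ++ β.take r ∧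
      thetaWord θ γ y = thetaWord θ (β.take r) y := by
  have hy' : y ≤ thetaWord θ [] a := hy.trans hxa
  by_cases hγp : γ.length < p
  · have hγ := hN.prefix_of_thetaWord_ne_bot hθ hC List.nil_prefix (by simp; omega) hy' h
    rw [List.nil_append, List.prefix_iff_eq_take] at hγ
    exact ⟨0, γ.length, hγp, by simpa [wordPow] using hγ, by rw [← hγ]⟩
  have hsplit : γ = β.take p ++ γ.drop p := by
    have hne : thetaWord θ (γ.take p) y ≠ ⊥ := by
      refine (isBoolAction_thetaWord hθ (γ.drop p)).ne_bot_of_map_ne_bot ?_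
      rwa [← thetaWord_append, List.take_append_drop]
    have hpre := hN.prefix_of_thetaWord_ne_bot hθ hC List.nil_prefix (by simp; omega) hy' hne
    rw [List.nil_append, List.prefix_iff_eq_take, List.length_take_of_le (by omega)] at hpre
    rw [← hpre, List.take_append_drop]
  have hdrop : thetaWord θ γ y = thetaWord θ (γ.drop p) y := by
    conv_lhs => rw [hsplit, thetaWord_append, hfix y hy]
  obtain ⟨k, r, hr, heq, hval⟩ :=
    exists_eq_wordPow_append_take hp0 hpn hxa hfix (γ.drop p) hy (hdrop ▸ h)
  refine ⟨k + 1, r, hr, ?_, hdrop.trans hval⟩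
  rw [hsplit, heq]
  simp only [wordPow, List.append_assoc]
termination_by γ.length
decreasing_by simp; omega

end CycleWithoutExits

theorem condL_of_condK (hθ : ∀ α, IsBoolAction (θ α)) (hK : CondK θ) : CondL θ := by
  classical
  rintro ⟨β, a, hC, hN⟩
  have hex : ∃ p, 0 < p ∧ p ≤ β.length ∧
      ∃ x, x ≠ ⊥ ∧ x ≤ a ∧ ∀ y ≤ x, thetaWord θ (β.take p) y = y :=
    ⟨β.length, List.length_pos_iff.2 hC.1, le_rfl, a, hC.2.1, le_rfl, by simpa using hC.2.2⟩
  obtain ⟨hp0, hpn, x, hx0, hxa, hfix⟩ := Nat.find_spec hex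
  -- `p` is the least period of `β` on some nonzero `x ≤ a`.
  set p := Nat.find hex
  have hmin : ∀ r, 0 < r → r < p → ∀ y ≤ x, y ≠ ⊥ → ∃ y' ≤ y, thetaWord θ (β.take r) y' ≠ y' := by
    intro r hr0 hrp y hyx hy0
    have := Nat.find_min hex hrp
    push Not at this
    exact this hr0 (by omega) y hy0 (hyx.trans hxa)
  obtain ⟨b, hbx, hb0, hb⟩ := hN.exists_forall_inf_thetaWord_take_eq_bot hθ hC hxa hx0 hmin
  obtain ⟨η, hη, hbη⟩ := exists_isUltra_mem hb0
  have hw := isBoolAction_thetaWord hθ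
  refine hK ⟨β.take p, η, b, ⟨by simp [List.take_eq_nil_iff, hC.1]; omega, hη, fun c hc => ?_⟩,
    hbη, fun γ hγ y hyb hmem => ?_⟩
  · refine hη.1.upper (hη.1.inf_mem hc hbη) ?_
    rw [← hfix _ (inf_le_right.trans hbx)]
    exact (hw _).monotone inf_le_left
  have hy0 : thetaWord θ γ y ≠ ⊥ := fun h => hη.1.bot_not_mem (h ▸ hmem)
  obtain ⟨k, r, hrp, rfl, hval⟩ :=
    hN.exists_eq_wordPow_append_take hθ hC hp0 hpn hxa hfix γ (hyb.trans hbx) hy0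
  rw [hval] at hmem
  rcases Nat.eq_zero_or_pos r with rfl | hr0
  · refine ⟨hmem, k, Nat.pos_of_ne_zero ?_, by simp⟩
    rintro rfl
    exact hγ (by simp [wordPow])
  · have hbot := hη.1.inf_mem hbη (hη.1.upper hmem ((hw _).monotone hyb))
    rw [hb r hr0 hrp] at hbot
    exact absurd hbot hη.1.bot_not_mem

theorem minimal_of_forall_eq_bot (h : ∀ a : X, a = ⊥) : Minimal θ :=
  fun _ hH _ _ => Or.inl (Set.eq_singleton_iff_unique_mem.2 ⟨hH.bot_mem, fun x _ => h x⟩)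

theorem condK_of_forall_eq_bot (h : ∀ a : X, a = ⊥) : CondK θ :=
  fun ⟨_, _, A, hUC, hA, _⟩ => hUC.2.1.1.bot_not_mem (h A ▸ hA)

theorem cyclicTail_iff_not_condK (hθ : ∀ α, IsBoolAction (θ α))
    (huniq : ∀ T, MaximalTail θ T → T = {a | a ≠ ⊥}) :
    CyclicTail θ {a | a ≠ ⊥} ↔ ¬ CondK θ := by
  refine ⟨fun ⟨β, η, hUC, _, A, hA, hP⟩ hK => hK ⟨β, η, A, hUC, hA, hP⟩, fun hK => ?_⟩
  obtain ⟨β, η, A, hUC, hA, hP⟩ := not_not.1 hK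
  exact ⟨β, η, hUC, (huniq _ (hUC.maximalTail hθ)).symm, A, hA, hP⟩

end BoolDyn

/-- **Statement 17.** The following are equivalent: (1) either `B = {∅}`, or `B ∖ {∅}` is the
only maximal tail and it is not cyclic; (2) `(B, L, θ)` is minimal and satisfies Condition
(L); (3) `(B, L, θ)` is minimal and satisfies Condition (K). -/
theorem minimal_condL_condK_tfae
    {X L : Type*} [GeneralizedBooleanAlgebra X] (θ : L → X → X)
    (hθ : ∀ α : L, IsBoolAction (θ α)) :
    (((∀ a : X, a = ⊥) ∨
        ((MaximalTail θ {a : X | a ≠ ⊥} ∧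
            ∀ T : Set X, MaximalTail θ T → T = {a : X | a ≠ ⊥}) ∧
          ¬ CyclicTail θ {a : X | a ≠ ⊥})) ↔
      (Minimal θ ∧ CondL θ)) ∧
    ((Minimal θ ∧ CondL θ) ↔ (Minimal θ ∧ CondK θ)) := by
  have hLK : Minimal θ ∧ CondL θ ↔ Minimal θ ∧ CondK θ :=
    ⟨fun h => ⟨h.1, condK_of_condL hθ h.1 h.2⟩, fun h => ⟨h.1, condL_of_condK hθ h.2⟩⟩
  refine ⟨?_, hLK⟩
  by_cases htriv : ∀ a : X, a = ⊥
  · exact iff_of_true (Or.inl htriv)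
      (hLK.2 ⟨minimal_of_forall_eq_bot htriv, condK_of_forall_eq_bot htriv⟩)
  obtain ⟨e, he⟩ := not_forall.1 htriv
  rw [or_iff_right htriv]
  constructor
  · rintro ⟨⟨-, huniq⟩, hcyc⟩
    exact hLK.2 ⟨minimal_of_forall_maximalTail_eq hθ huniq,
      not_not.1 (mt (cyclicTail_iff_not_condK hθ huniq).2 hcyc)⟩
  · rintro ⟨hmin, hL⟩
    have huniq : ∀ T, MaximalTail θ T → T = {a | a ≠ ⊥} := fun _ hT => hmin.maximalTail_eq hT
    exact ⟨⟨hmin.maximalTail_ne_bot hθ he, huniq⟩,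
      fun hcyc => (cyclicTail_iff_not_condK hθ huniq).1 hcyc (condK_of_condL hθ hmin hL)⟩
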